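/- Let τ > 0, let ζ > −1 and let d be a real number with (1/2)d² + ζ(ζ²/3 − 1) < 2/3. Let θ : [0,∞) → ℝ be twice continuously differentiable with θ''(t) + τ·θ'(t) + θ(t)² − 1 = 0 for all t ≥ 0, θ(0) = ζ and θ'(0) = d. Then θ(t) → 1 and θ'(t) → 0 as t → ∞. -/

import Mathlib

/-! Along a solution the Lyapunov function `E(θ, φ) = φ²/2 + θ³/3 - θ` decreases at rate `τ φ²`.
Since `E(-1, φ) ≥ 2/3`, a solution starting in `P` can never reach `θ = -1`, so it stays in `P`,
where `θ ∈ (-1, 2)` and `θ`, `θ'`, `θ''` are bounded. Then `E` converges, and since `θ'` is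
Lipschitz, the energy loss `∫ τ θ'²` being finite forces `θ' → 0` (Barbalat). The mean value theorem
gives times `sₙ → ∞` with `θ''(sₙ) → 0`, hence `1 - θ(sₙ)² → 0`; as `θ + 1` stays bounded away
from `0` on the sublevel set, `θ(sₙ) → 1` and `E → E(1, 0) = -2/3`, the minimum of `E` on `P`,
which forces `θ → 1`. -/

open Set Filter Topology

theorem Convex.antitoneOn_of_hasDerivWithinAt_nonpos {D : Set ℝ} (hD : Convex ℝ D)
    {f f' : ℝ → ℝ} (hf : ∀ x ∈ D, HasDerivWithinAt f (f' x) D x) (hf' : ∀ x ∈ D, f' x ≤ 0) :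
    AntitoneOn f D :=
  _root_.antitoneOn_of_hasDerivWithinAt_nonpos hD (fun x hx => (hf x hx).continuousWithinAt)
    (fun x hx => (hf x (interior_subset hx)).mono interior_subset)
    (fun x hx => hf' x (interior_subset hx))

theorem AntitoneOn.exists_tendsto_atTop {f : ℝ → ℝ} {a : ℝ} (hf : AntitoneOn f (Ici a))
    (hb : BddBelow (f '' Ici a)) : ∃ L, Tendsto f atTop (𝓝 L) := by
  have hanti : Antitone fun t => f (max a t) := fun s t hst =>
    hf (le_max_left a s) (le_max_left a t) (max_le_max_left a hst)
  have hbdd : BddBelow (range fun t => f (max a t)) :=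
    hb.mono (range_subset_iff.2 fun t => mem_image_of_mem f (le_max_left a t))
  refine ⟨_, (tendsto_atTop_ciInf hanti hbdd).congr' ?_⟩
  filter_upwards [eventually_ge_atTop a] with t ht
  rw [max_eq_right ht]

theorem sub_le_of_hasDerivWithinAt_neg_of_le {F w : ℝ → ℝ} {a t h m : ℝ} (ht : a ≤ t)
    (hh : 0 ≤ h) (hF : ∀ s ∈ Ici a, HasDerivWithinAt F (-w s) (Ici a) s)
    (hw : ∀ s ∈ Icc t (t + h), m ≤ w s) : F (t + h) ≤ F t - m * h := by
  have hsub : Icc t (t + h) ⊆ Ici a := fun s hs => ht.trans hs.1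
  have hanti : AntitoneOn (fun s => F s + m * s) (Icc t (t + h)) := by
    refine (convex_Icc _ _).antitoneOn_of_hasDerivWithinAt_nonpos
      (f' := fun s => -w s + m) (fun s hs => ?_) (fun s hs => by linarith [hw s hs])
    have := ((hF s (hsub hs)).mono hsub).add ((hasDerivWithinAt_id s _).const_mul m)
    rwa [mul_one] at this
  have := hanti (left_mem_Icc.2 (by linarith)) (right_mem_Icc.2 (by linarith)) (by linarith)
  linarith

-- Barbalat's lemma: whenever `w t ≥ ε`, the Lipschitz bound keeps `w ≥ ε / 2` on `[t, t + h]`,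
-- so `F` drops by `ε h / 2` there, which is impossible for large `t` since `F` converges.
theorem tendsto_zero_of_hasDerivWithinAt_neg {F w w' : ℝ → ℝ} {a K : ℝ}
    (hF : ∀ t ∈ Ici a, HasDerivWithinAt F (-w t) (Ici a) t) (hFb : BddBelow (F '' Ici a))
    (hw₀ : ∀ t ∈ Ici a, 0 ≤ w t) (hw : ∀ t ∈ Ici a, HasDerivWithinAt w (w' t) (Ici a) t)
    (hw' : ∀ t ∈ Ici a, |w' t| ≤ K) : Tendsto w atTop (𝓝 0) := by
  obtain ⟨L, hL⟩ := ((convex_Ici a).antitoneOn_of_hasDerivWithinAt_nonpos hF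
    fun t ht => neg_nonpos.2 (hw₀ t ht)).exists_tendsto_atTop hFb
  refine tendsto_order.2 ⟨fun b hb => ?_, fun ε hε => ?_⟩
  · filter_upwards [eventually_ge_atTop a] with t ht
    exact hb.trans_le (hw₀ t ht)
  obtain ⟨h, hh, hKh⟩ : ∃ h > 0, K * h ≤ ε / 2 := by
    refine ⟨ε / (2 * (|K| + 1)), by positivity, ?_⟩
    rw [← mul_div_assoc, div_le_div_iff₀ (by positivity) (by positivity)]
    nlinarith [le_abs_self K, abs_nonneg K]
  have hdrop : Tendsto (fun t => F t - F (t + h)) atTop (𝓝 0) := by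
    simpa using hL.sub (hL.comp (tendsto_atTop_add_const_right _ h tendsto_id))
  filter_upwards [eventually_ge_atTop a, hdrop.eventually (gt_mem_nhds (by positivity :
    (0 : ℝ) < ε / 2 * h))] with t ht hsmall
  by_contra! hbig
  have hlip (s : ℝ) (hs : s ∈ Icc t (t + h)) : ε / 2 ≤ w s := by
    have := (convex_Ici a).norm_image_sub_le_of_norm_hasDerivWithin_le hw hw'
      (mem_Ici.2 ht) (mem_Ici.2 (ht.trans hs.1))
    rw [Real.norm_eq_abs, Real.norm_eq_abs, abs_of_nonneg (sub_nonneg.2 hs.1)] at this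
    have hK : 0 ≤ K := (abs_nonneg _).trans (hw' t ht)
    have := mul_le_mul_of_nonneg_left (show s - t ≤ h by linarith [hs.2]) hK
    linarith [neg_abs_le (w s - w t)]
  have := sub_le_of_hasDerivWithinAt_neg_of_le ht hh.le hF hlip
  linarith

theorem tendsto_of_sq_sub_le {α : Type*} {l : Filter α} {f g : α → ℝ} {b : ℝ}
    (hg : Tendsto g l (𝓝 0)) (hfg : ∀ᶠ x in l, (f x - b) ^ 2 ≤ g x) : Tendsto f l (𝓝 b) := by
  rw [tendsto_iff_dist_tendsto_zero]
  refine squeeze_zero' (Eventually.of_forall fun x => dist_nonneg) ?_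
    (by simpa using hg.sqrt)
  filter_upwards [hfg] with x hx
  exact Real.abs_le_sqrt hx

theorem exists_seq_tendsto_deriv_zero {u u' : ℝ → ℝ} {a l : ℝ}
    (hu : ∀ t ∈ Ici a, HasDerivWithinAt u (u' t) (Ici a) t) (hl : Tendsto u atTop (𝓝 l)) :
    ∃ s : ℕ → ℝ, Tendsto s atTop atTop ∧ Tendsto (u' ∘ s) atTop (𝓝 0) := by
  have hmvt (n : ℕ) : ∃ c ∈ Ioo (a + n) (a + n + 1), u' c = u (a + n + 1) - u (a + n) := by
    have hsub : Icc (a + n) (a + n + 1) ⊆ Ici a := fun x hx => by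
      simp only [mem_Icc, mem_Ici] at hx ⊢; linarith [hx.1, n.cast_nonneg (α := ℝ)]
    obtain ⟨c, hc, hslope⟩ := exists_hasDerivAt_eq_slope u u' (lt_add_one (a + n))
      (fun x hx => ((hu x (hsub hx)).continuousWithinAt).mono hsub)
      (fun x hx => (hu x (hsub (Ioo_subset_Icc_self hx))).hasDerivAt
        (Ici_mem_nhds (by linarith [hx.1, n.cast_nonneg (α := ℝ)])))
    exact ⟨c, hc, by rw [hslope]; ring⟩
  choose s hs hslope using hmvt
  have hn : Tendsto (fun n : ℕ => a + n) atTop atTop :=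
    tendsto_atTop_add_const_left _ a tendsto_natCast_atTop_atTop
  refine ⟨s, tendsto_atTop_mono (fun n => (hs n).1.le) hn, ?_⟩
  have hdiff := ((hl.comp (tendsto_atTop_add_const_right _ 1 hn)).sub (hl.comp hn))
  simpa [Function.comp_def, hslope] using hdiff

noncomputable def energy (x y : ℝ) : ℝ := y ^ 2 / 2 + x ^ 3 / 3 - x

def attractionDomain : Set (ℝ × ℝ) := {p | -1 < p.1 ∧ energy p.1 p.2 < 2 / 3}

structure IsSolution (τ : ℝ) (θ θ' θ'' : ℝ → ℝ) : Prop where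
  hasDerivWithinAt : ∀ t ∈ Ici (0 : ℝ), HasDerivWithinAt θ (θ' t) (Ici 0) t
  hasDerivWithinAt' : ∀ t ∈ Ici (0 : ℝ), HasDerivWithinAt θ' (θ'' t) (Ici 0) t
  ode : ∀ t, 0 ≤ t → θ'' t + τ * θ' t + θ t ^ 2 - 1 = 0

section energy

variable {x y : ℝ}

theorem energy_add_two_thirds (x y : ℝ) :
    energy x y + 2 / 3 = y ^ 2 / 2 + (x - 1) ^ 2 * (x + 2) / 3 := by
  unfold energy; ring

theorem two_thirds_sub_energy (x y : ℝ) :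
    2 / 3 - energy x y = (x + 1) ^ 2 * (2 - x) / 3 - y ^ 2 / 2 := by
  unfold energy; ring

theorem le_energy_add_two_thirds (hx : -1 < x) :
    (x - 1) ^ 2 / 3 + y ^ 2 / 2 ≤ energy x y + 2 / 3 := by
  rw [energy_add_two_thirds]
  nlinarith [mul_nonneg (sq_nonneg (x - 1)) (neg_lt_iff_pos_add'.1 hx).le]

theorem neg_two_thirds_le_energy (hx : -1 < x) : -(2 / 3) ≤ energy x y := by
  nlinarith [le_energy_add_two_thirds (y := y) hx, sq_nonneg (x - 1), sq_nonneg y]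

theorem ne_neg_one_of_energy_lt (h : energy x y < 2 / 3) : x ≠ -1 := by
  rintro rfl
  rw [← sub_pos, two_thirds_sub_energy] at h
  nlinarith [sq_nonneg y]

theorem lt_two_of_mem_attractionDomain (h : (x, y) ∈ attractionDomain) : x < 2 := by
  obtain ⟨-, h⟩ := h
  rw [← sub_pos, two_thirds_sub_energy] at h
  by_contra! hx
  nlinarith [mul_nonneg (sq_nonneg (x + 1)) (sub_nonneg.2 hx), sq_nonneg y]

theorem two_thirds_sub_energy_le (hx : -1 < x) : 2 / 3 - energy x y ≤ (x + 1) ^ 2 := by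
  rw [two_thirds_sub_energy]
  nlinarith [mul_nonneg (sq_nonneg (x + 1)) (neg_lt_iff_pos_add'.1 hx).le, sq_nonneg y]

theorem energy_add_two_thirds_le_of_le_sq {c : ℝ} (hx : x < 2) (hc : 0 < c)
    (hxc : c ≤ (x + 1) ^ 2) : energy x y + 2 / 3 ≤ y ^ 2 / 2 + 4 / 3 * ((1 - x ^ 2) ^ 2 / c) := by
  have hfactor : (x - 1) ^ 2 ≤ (1 - x ^ 2) ^ 2 / c := by
    rw [le_div_iff₀ hc]
    nlinarith [mul_le_mul_of_nonneg_left hxc (sq_nonneg (x - 1))]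
  rw [energy_add_two_thirds]
  nlinarith [mul_le_mul_of_nonneg_left hx.le (sq_nonneg (x - 1))]

theorem abs_le_two_of_mem_attractionDomain (h : (x, y) ∈ attractionDomain) : |y| ≤ 2 := by
  have hE : energy x y < 2 / 3 := h.2
  have := le_energy_add_two_thirds (y := y) h.1
  exact abs_le_of_sq_le_sq (by nlinarith [sq_nonneg (x - 1)]) zero_le_two

theorem abs_one_sub_sq_le_three_of_mem_attractionDomain (h : (x, y) ∈ attractionDomain) :
    |1 - x ^ 2| ≤ 3 := by
  have h₁ := h.1
  have h₂ := lt_two_of_mem_attractionDomain h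
  exact abs_le.2 ⟨by nlinarith, by nlinarith⟩

end energy

namespace IsSolution

variable {τ : ℝ} {θ θ' θ'' : ℝ → ℝ}

theorem hasDerivWithinAt_energy (hs : IsSolution τ θ θ' θ'') {t : ℝ} (ht : t ∈ Ici (0 : ℝ)) :
    HasDerivWithinAt (fun t => energy (θ t) (θ' t)) (-(τ * θ' t ^ 2)) (Ici 0) t := by
  have h := (((hs.hasDerivWithinAt' t ht).pow 2).div_const 2).add
    (((hs.hasDerivWithinAt t ht).pow 3).div_const 3) |>.sub (hs.hasDerivWithinAt t ht)
  refine h.congr_deriv ?_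
  linear_combination θ' t * hs.ode t ht

theorem continuousOn (hs : IsSolution τ θ θ' θ'') : ContinuousOn θ (Ici 0) :=
  fun t ht => (hs.hasDerivWithinAt t ht).continuousWithinAt

theorem antitoneOn_energy (hs : IsSolution τ θ θ' θ'') (hτ : 0 ≤ τ) :
    AntitoneOn (fun t => energy (θ t) (θ' t)) (Ici 0) :=
  (convex_Ici 0).antitoneOn_of_hasDerivWithinAt_nonpos (fun t ht => hs.hasDerivWithinAt_energy ht)
    fun t _ => neg_nonpos.2 (by positivity)

theorem mem_attractionDomain (hs : IsSolution τ θ θ' θ'') (hτ : 0 ≤ τ)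
    (h₀ : (θ 0, θ' 0) ∈ attractionDomain) {t : ℝ} (ht : 0 ≤ t) :
    (θ t, θ' t) ∈ attractionDomain := by
  have henergy (s : ℝ) (hs' : 0 ≤ s) : energy (θ s) (θ' s) < 2 / 3 :=
    (hs.antitoneOn_energy hτ self_mem_Ici hs' hs').trans_lt h₀.2
  refine ⟨?_, henergy t ht⟩
  by_contra! hθt
  obtain ⟨s, hs', hθs⟩ := intermediate_value_Icc' ht
    (hs.continuousOn.mono Icc_subset_Ici_self)
    ⟨hθt, h₀.1.le⟩
  exact ne_neg_one_of_energy_lt (henergy s hs'.1) hθs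

theorem abs_deriv₂_le (hs : IsSolution τ θ θ' θ'') (hτ : 0 ≤ τ) {t : ℝ} (ht : 0 ≤ t)
    (hmem : (θ t, θ' t) ∈ attractionDomain) : |θ'' t| ≤ 3 + 2 * τ := by
  have hθ'' : θ'' t = (1 - θ t ^ 2) - τ * θ' t := by linear_combination hs.ode t ht
  calc |θ'' t| ≤ |1 - θ t ^ 2| + τ * |θ' t| := by
        rw [hθ'', ← abs_of_nonneg hτ, ← abs_mul, abs_of_nonneg hτ]; exact abs_sub _ _
    _ ≤ 3 + τ * 2 := by
        gcongr
        exacts [abs_one_sub_sq_le_three_of_mem_attractionDomain hmem,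
          abs_le_two_of_mem_attractionDomain hmem]
    _ = 3 + 2 * τ := by ring

theorem bddBelow_energy (hs : IsSolution τ θ θ' θ'') (hτ : 0 ≤ τ)
    (h₀ : (θ 0, θ' 0) ∈ attractionDomain) :
    BddBelow ((fun t => energy (θ t) (θ' t)) '' Ici 0) := by
  refine ⟨-(2 / 3), ?_⟩
  rintro _ ⟨t, ht, rfl⟩
  exact neg_two_thirds_le_energy (hs.mem_attractionDomain hτ h₀ ht).1

theorem tendsto_deriv_zero (hs : IsSolution τ θ θ' θ'') (hτ : 0 < τ)
    (h₀ : (θ 0, θ' 0) ∈ attractionDomain) : Tendsto θ' atTop (𝓝 0) := by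
  have hmem {t : ℝ} (ht : t ∈ Ici (0 : ℝ)) := hs.mem_attractionDomain hτ.le h₀ ht
  have hw : Tendsto (fun t => τ * θ' t ^ 2) atTop (𝓝 0) :=
    tendsto_zero_of_hasDerivWithinAt_neg (w' := fun t => τ * (2 * θ' t * θ'' t))
      (K := τ * (2 * 2 * (3 + 2 * τ))) (fun t ht => hs.hasDerivWithinAt_energy ht)
      (hs.bddBelow_energy hτ.le h₀) (fun t _ => by positivity)
      (fun t ht => (((hs.hasDerivWithinAt' t ht).pow 2).const_mul τ).congr_deriv (by ring))
      fun t ht => by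
        rw [abs_mul, abs_mul, abs_mul, abs_of_pos hτ, abs_two]
        gcongr
        exacts [abs_le_two_of_mem_attractionDomain (hmem ht), hs.abs_deriv₂_le hτ.le ht (hmem ht)]
  refine tendsto_of_sq_sub_le (by simpa using hw.const_mul τ⁻¹) (Eventually.of_forall fun t => ?_)
  rw [sub_zero, inv_mul_cancel_left₀ hτ.ne']

theorem energy_add_two_thirds_le (hs : IsSolution τ θ θ' θ'') (hτ : 0 ≤ τ)
    (h₀ : (θ 0, θ' 0) ∈ attractionDomain) {t : ℝ} (ht : 0 ≤ t) :
    energy (θ t) (θ' t) + 2 / 3 ≤ θ' t ^ 2 / 2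
      + 4 / 3 * ((θ'' t + τ * θ' t) ^ 2 / (2 / 3 - energy (θ 0) (θ' 0))) := by
  have hmem := hs.mem_attractionDomain hτ h₀ ht
  have hθ₀ : 2 / 3 - energy (θ 0) (θ' 0) ≤ (θ t + 1) ^ 2 :=
    (sub_le_sub_left (hs.antitoneOn_energy hτ self_mem_Ici ht ht) _).trans
      (two_thirds_sub_energy_le hmem.1)
  rw [show θ'' t + τ * θ' t = 1 - θ t ^ 2 by linear_combination hs.ode t ht]
  exact energy_add_two_thirds_le_of_le_sq (lt_two_of_mem_attractionDomain hmem) (sub_pos.2 h₀.2)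
    hθ₀

theorem tendsto_energy (hs : IsSolution τ θ θ' θ'') (hτ : 0 < τ)
    (h₀ : (θ 0, θ' 0) ∈ attractionDomain) :
    Tendsto (fun t => energy (θ t) (θ' t)) atTop (𝓝 (-(2 / 3))) := by
  obtain ⟨L, hL⟩ :=
    (hs.antitoneOn_energy hτ.le).exists_tendsto_atTop (hs.bddBelow_energy hτ.le h₀)
  have hθ' := hs.tendsto_deriv_zero hτ h₀
  obtain ⟨s, hs_top, hθ''⟩ := exists_seq_tendsto_deriv_zero hs.hasDerivWithinAt' hθ'
  set c := 2 / 3 - energy (θ 0) (θ' 0)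
  have hbound : Tendsto (fun n => θ' (s n) ^ 2 / 2
      + 4 / 3 * ((θ'' (s n) + τ * θ' (s n)) ^ 2 / c)) atTop (𝓝 0) := by
    have hθ's := hθ'.comp hs_top
    simpa using ((hθ's.pow 2).div_const 2).add
      ((((hθ''.add (hθ's.const_mul τ)).pow 2).div_const c).const_mul (4 / 3))
  have hsq : Tendsto (fun n => energy (θ (s n)) (θ' (s n)) + 2 / 3) atTop (𝓝 0) := by
    have hs_nonneg := hs_top.eventually (eventually_ge_atTop 0)
    refine squeeze_zero' ?_ ?_ hbound
    · filter_upwards [hs_nonneg] with n hn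
      linarith [neg_two_thirds_le_energy (y := θ' (s n)) (hs.mem_attractionDomain hτ.le h₀ hn).1]
    · filter_upwards [hs_nonneg] with n hn
      exact hs.energy_add_two_thirds_le hτ.le h₀ hn
  have hL' : L = -(2 / 3) := by
    refine tendsto_nhds_unique (hL.comp hs_top) ?_
    have h := hsq.add_const (-(2 / 3))
    rw [zero_add] at h
    exact h.congr fun n => by simp only [Function.comp_apply]; ring
  exact hL' ▸ hL

theorem tendsto_one (hs : IsSolution τ θ θ' θ'') (hτ : 0 < τ)
    (h₀ : (θ 0, θ' 0) ∈ attractionDomain) : Tendsto θ atTop (𝓝 1) := by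
  refine tendsto_of_sq_sub_le (g := fun t => 3 * (energy (θ t) (θ' t) + 2 / 3))
    (by convert ((hs.tendsto_energy hτ h₀).add_const (2 / 3)).const_mul 3 using 2; norm_num) ?_
  filter_upwards [eventually_ge_atTop 0] with t ht
  have := le_energy_add_two_thirds (y := θ' t) (hs.mem_attractionDomain hτ.le h₀ ht).1
  nlinarith [sq_nonneg (θ' t)]

end IsSolution

theorem stmt_12_general (τ ζ d : ℝ) (hτ : 0 < τ) (hζ : -1 < ζ)
    (hP : (1 / 2) * d ^ 2 + ζ * (ζ ^ 2 / 3 - 1) < 2 / 3) (θ θ' θ'' : ℝ → ℝ)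
    (hd1 : ∀ t ∈ Ici (0 : ℝ), HasDerivWithinAt θ (θ' t) (Ici 0) t)
    (hd2 : ∀ t ∈ Ici (0 : ℝ), HasDerivWithinAt θ' (θ'' t) (Ici 0) t)
    (heq : ∀ t : ℝ, 0 ≤ t → θ'' t + τ * θ' t + (θ t) ^ 2 - 1 = 0)
    (h0 : θ 0 = ζ) (h0' : θ' 0 = d) :
    Tendsto θ atTop (nhds 1) ∧ Tendsto θ' atTop (nhds 0) := by
  have hs : IsSolution τ θ θ' θ'' := ⟨hd1, hd2, heq⟩
  have h₀ : (θ 0, θ' 0) ∈ attractionDomain := by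
    refine ⟨h0 ▸ hζ, ?_⟩
    convert hP using 1
    simp only [energy, h0, h0']
    ring
  exact ⟨hs.tendsto_one hτ h₀, hs.tendsto_deriv_zero hτ h₀⟩

/-- Paper's Proposition 3.2: for `τ > 0` and initial data in the region
`P = {(ζ,d) : ζ > -1, (1/2)d² + ζ(ζ²/3 - 1) < 2/3}`, the global solution of
`θ'' + τθ' + θ² - 1 = 0` on `[0,∞)` satisfies `θ(t) → 1` and `θ'(t) → 0` at infinity. -/
theorem stmt_12 (τ ζ d : ℝ) (hτ : 0 < τ) (hζ : -1 < ζ)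
    (hP : (1 / 2) * d ^ 2 + ζ * (ζ ^ 2 / 3 - 1) < 2 / 3) (θ θ' θ'' : ℝ → ℝ)
    (hd1 : ∀ t ∈ Ici (0 : ℝ), HasDerivWithinAt θ (θ' t) (Ici 0) t)
    (hd2 : ∀ t ∈ Ici (0 : ℝ), HasDerivWithinAt θ' (θ'' t) (Ici 0) t)
    (hc : ContinuousOn θ'' (Ici 0))
    (heq : ∀ t : ℝ, 0 ≤ t → θ'' t + τ * θ' t + (θ t) ^ 2 - 1 = 0)
    (h0 : θ 0 = ζ) (h0' : θ' 0 = d) :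
    Tendsto θ atTop (nhds 1) ∧ Tendsto θ' atTop (nhds 0) :=
  stmt_12_general τ ζ d hτ hζ hP θ θ' θ'' hd1 hd2 heq h0 h0'
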